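/- Let g ≥ 1, let c₁, …, c_g be distinct reals, and let p = (p₀,…,p_g), q = (q₀,…,q_g) ∈ ℝ^{g+1} with p_g ≠ 0. Then q_g − (Σ_{j=0}^{g} p_j q_j)/p_g = −Σ_{k=1}^{g} trace( [∏_{j=0}^{k−2} a(c_k, c_{j+1}; p_j, q_j)] · (column vector (p_{k−1}, q_{k−1})) · (row vector (−q_{k−1}, p_{k−1})) · [∏_{j=k}^{g−1} a(c_k, c_{j+1}; p_j, q_j)] · [[0,0],[0, 1/p_g]] ), where empty products are the identity matrix. -/

import Mathlib

open Matrix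

/-- The matrix `𝔧 = [[0,−1],[1,0]]`. -/
def jmat : Matrix (Fin 2) (Fin 2) ℝ := !![0, -1; 1, 0]

/-- The Blaschke–Potapov factor
`a(z,c;p,q) = I − (c−z)⁻¹ · (p,q)ᵀ(p,q) · 𝔧`, defined for `z ≠ c`. -/
noncomputable def bpa (z c p q : ℝ) : Matrix (Fin 2) (Fin 2) ℝ :=
  1 - (c - z)⁻¹ •
    ((!![p; q] : Matrix (Fin 2) (Fin 1) ℝ) * (!![p, q] : Matrix (Fin 1) (Fin 2) ℝ) * jmat)

/-- The Blaschke–Potapov factor at infinity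
`a(z;p,q) = [[0, −p],[1/p, (z−pq)/p]]`, defined for `p ≠ 0`. -/
noncomputable def bpinf (z p q : ℝ) : Matrix (Fin 2) (Fin 2) ℝ :=
  !![0, -p; 1 / p, (z - p * q) / p]

/-- Ordered (noncommutative) product `F s * F (s+1) * ⋯ * F (s+n−1)`;
for `n = 0` this is the identity matrix. -/
noncomputable def prodBP (F : ℕ → Matrix (Fin 2) (Fin 2) ℝ) (s n : ℕ) :
    Matrix (Fin 2) (Fin 2) ℝ :=
  ((List.range n).map fun i => F (s + i)).prod

/-- The transfer matrix
`𝔄(z) = a(z,c₁;p₀,q₀) ⋯ a(z,c_g;p_{g−1},q_{g−1}) · a(z;p_g,q_g)`. -/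
noncomputable def transferM (g : ℕ) (c p q : ℕ → ℝ) (z : ℝ) : Matrix (Fin 2) (Fin 2) ℝ :=
  prodBP (fun j => bpa z (c (j + 1)) (p j) (q j)) 0 g * bpinf z (p g) (q g)

/- ----------------- auxiliary development ----------------- -/

/-- `B = (p,q)ᵀ (p,q) 𝔧`. -/
noncomputable def Bm (p q : ℝ) : Matrix (Fin 2) (Fin 2) ℝ :=
  (!![p; q] : Matrix (Fin 2) (Fin 1) ℝ) * (!![p, q] : Matrix (Fin 1) (Fin 2) ℝ) * jmat

lemma bpa_eq (z c p q : ℝ) : bpa z c p q = 1 - (c - z)⁻¹ • Bm p q := rfl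

lemma prodBP_zero (F : ℕ → Matrix (Fin 2) (Fin 2) ℝ) (s : ℕ) : prodBP F s 0 = 1 := by
  simp [prodBP]

lemma prodBP_succ (F : ℕ → Matrix (Fin 2) (Fin 2) ℝ) (s n : ℕ) :
    prodBP F s (n + 1) = prodBP F s n * F (s + n) := by
  simp [prodBP, List.range_succ]

/-- The residue matrix `Φ_k = M_k B_{k-1} N_k` (everything evaluated at `z = c_k`). -/
noncomputable def Phi (c p q : ℕ → ℝ) (g k : ℕ) : Matrix (Fin 2) (Fin 2) ℝ :=
  prodBP (fun j => bpa (c k) (c (j + 1)) (p j) (q j)) 0 (k - 1) *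
    Bm (p (k - 1)) (q (k - 1)) *
    prodBP (fun j => bpa (c k) (c (j + 1)) (p j) (q j)) k (g - k)

lemma Phi_succ (c p q : ℕ → ℝ) (g k : ℕ) (hk : k ≤ g) :
    Phi c p q (g + 1) k = Phi c p q g k * bpa (c k) (c (g + 1)) (p g) (q g) := by
  unfold Phi
  have h1 : g + 1 - k = (g - k) + 1 := by omega
  have h2 : k + (g - k) = g := by omega
  rw [h1, prodBP_succ, h2, ← mul_assoc]

lemma Phi_top (c p q : ℕ → ℝ) (g : ℕ) :
    Phi c p q (g + 1) (g + 1) =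
      prodBP (fun j => bpa (c (g + 1)) (c (j + 1)) (p j) (q j)) 0 g * Bm (p g) (q g) := by
  unfold Phi
  simp [prodBP_zero]

/-- Matrix partial fraction expansion of the Blaschke–Potapov product. -/
lemma key (c p q : ℕ → ℝ) : ∀ g : ℕ,
    (∀ i ∈ Finset.Icc 1 g, ∀ j ∈ Finset.Icc 1 g, c i = c j → i = j) →
    ∀ z : ℝ, (∀ k ∈ Finset.Icc 1 g, z ≠ c k) →
    prodBP (fun j => bpa z (c (j + 1)) (p j) (q j)) 0 g =
      1 - ∑ k ∈ Finset.Icc 1 g, (c k - z)⁻¹ • Phi c p q g k := by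
  intro g
  induction g with
  | zero => intro _ z _; simp [prodBP]
  | succ g ih =>
    intro hc z hz
    have hsub : Finset.Icc 1 g ⊆ Finset.Icc 1 (g + 1) := by
      apply Finset.Icc_subset_Icc_right; omega
    have hc' : ∀ i ∈ Finset.Icc 1 g, ∀ j ∈ Finset.Icc 1 g, c i = c j → i = j :=
      fun i hi j hj => hc i (hsub hi) j (hsub hj)
    have hz' : ∀ k ∈ Finset.Icc 1 g, z ≠ c k := fun k hk => hz k (hsub hk)
    have htopmem : g + 1 ∈ Finset.Icc 1 (g + 1) := by simp
    have hz1 : z ≠ c (g + 1) := hz _ htopmem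
    have hcg : ∀ k ∈ Finset.Icc 1 g, c (g + 1) ≠ c k := by
      intro k hk h
      have := hc (g + 1) htopmem k (hsub hk) h
      simp only [Finset.mem_Icc] at hk; omega
    have hP := ih hc' z hz'
    have hPg := ih hc' (c (g + 1)) hcg
    have hprod : prodBP (fun j => bpa z (c (j + 1)) (p j) (q j)) 0 (g + 1) =
        prodBP (fun j => bpa z (c (j + 1)) (p j) (q j)) 0 g *
          bpa z (c (g + 1)) (p g) (q g) := by
      rw [prodBP_succ]; norm_num
    have hA1 : ∑ k ∈ Finset.Icc 1 g, (c k - z)⁻¹ • Phi c p q (g + 1) k =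
        (∑ k ∈ Finset.Icc 1 g, (c k - z)⁻¹ • Phi c p q g k)
          - ∑ k ∈ Finset.Icc 1 g,
              ((c k - z)⁻¹ * (c (g + 1) - c k)⁻¹) • (Phi c p q g k * Bm (p g) (q g)) := by
      rw [← Finset.sum_sub_distrib]
      refine Finset.sum_congr rfl fun k hk => ?_
      rw [Phi_succ c p q g k (Finset.mem_Icc.mp hk).2, bpa_eq, mul_sub, mul_one,
        smul_sub, mul_smul_comm, smul_smul]
    have hA2 : (c (g + 1) - z)⁻¹ • Phi c p q (g + 1) (g + 1) =
        (c (g + 1) - z)⁻¹ • Bm (p g) (q g)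
          + ∑ k ∈ Finset.Icc 1 g,
              ((c (g + 1) - z)⁻¹ * (c (g + 1) - c k)⁻¹) • (Phi c p q g k * Bm (p g) (q g)) := by
      rw [Phi_top, hPg, sub_mul, one_mul, smul_sub, Finset.sum_mul, Finset.smul_sum]
      have h : ∀ k ∈ Finset.Icc 1 g,
          (c (g + 1) - z)⁻¹ • ((c k - c (g + 1))⁻¹ • Phi c p q g k * Bm (p g) (q g)) =
            -(((c (g + 1) - z)⁻¹ * (c (g + 1) - c k)⁻¹) •
              (Phi c p q g k * Bm (p g) (q g))) := by
        intro k _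
        rw [smul_mul_assoc, smul_smul, ← neg_smul]
        congr 1
        rw [show c k - c (g + 1) = -(c (g + 1) - c k) by ring, inv_neg]
        ring
      rw [Finset.sum_congr rfl h, Finset.sum_neg_distrib]
      abel
    have hLHS : (1 - ∑ k ∈ Finset.Icc 1 g, (c k - z)⁻¹ • Phi c p q g k) *
          (1 - (c (g + 1) - z)⁻¹ • Bm (p g) (q g)) =
        1 - (∑ k ∈ Finset.Icc 1 g, (c k - z)⁻¹ • Phi c p q g k)
          - (c (g + 1) - z)⁻¹ • Bm (p g) (q g)
          + (c (g + 1) - z)⁻¹ •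
              ((∑ k ∈ Finset.Icc 1 g, (c k - z)⁻¹ • Phi c p q g k) * Bm (p g) (q g)) := by
      rw [mul_sub, mul_one, sub_mul, one_mul, mul_smul_comm]
      abel
    have hS1B : (c (g + 1) - z)⁻¹ •
          ((∑ k ∈ Finset.Icc 1 g, (c k - z)⁻¹ • Phi c p q g k) * Bm (p g) (q g)) =
        (∑ k ∈ Finset.Icc 1 g,
            ((c k - z)⁻¹ * (c (g + 1) - c k)⁻¹) • (Phi c p q g k * Bm (p g) (q g)))
          - ∑ k ∈ Finset.Icc 1 g,
              ((c (g + 1) - z)⁻¹ * (c (g + 1) - c k)⁻¹) • (Phi c p q g k * Bm (p g) (q g)) := by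
      rw [Finset.sum_mul, Finset.smul_sum, ← Finset.sum_sub_distrib]
      refine Finset.sum_congr rfl fun k hk => ?_
      rw [smul_mul_assoc, smul_smul, ← sub_smul]
      congr 1
      have h1 : c k - z ≠ 0 := sub_ne_zero.mpr fun h => hz' k hk h.symm
      have h2 : c (g + 1) - z ≠ 0 := sub_ne_zero.mpr fun h => hz1 h.symm
      have h3 : c (g + 1) - c k ≠ 0 := sub_ne_zero.mpr (hcg k hk)
      field_simp
      ring
    rw [hprod, hP, bpa_eq, Finset.sum_Icc_succ_top (by omega : 1 ≤ g + 1), hA1, hA2,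
      hLHS, hS1B]
    abel

/-- Sum of residues equals sum of `B_j`. -/
lemma sumPhi (c p q : ℕ → ℝ) : ∀ g : ℕ,
    (∀ i ∈ Finset.Icc 1 g, ∀ j ∈ Finset.Icc 1 g, c i = c j → i = j) →
    ∑ k ∈ Finset.Icc 1 g, Phi c p q g k = ∑ j ∈ Finset.range g, Bm (p j) (q j) := by
  intro g
  induction g with
  | zero => intro _; simp
  | succ g ih =>
    intro hc
    have hsub : Finset.Icc 1 g ⊆ Finset.Icc 1 (g + 1) := by
      apply Finset.Icc_subset_Icc_right; omega
    have hc' : ∀ i ∈ Finset.Icc 1 g, ∀ j ∈ Finset.Icc 1 g, c i = c j → i = j :=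
      fun i hi j hj => hc i (hsub hi) j (hsub hj)
    have htopmem : g + 1 ∈ Finset.Icc 1 (g + 1) := by simp
    have hcg : ∀ k ∈ Finset.Icc 1 g, c (g + 1) ≠ c k := by
      intro k hk h
      have := hc (g + 1) htopmem k (hsub hk) h
      simp only [Finset.mem_Icc] at hk; omega
    have hPg := key c p q g hc' (c (g + 1)) hcg
    set Bg := Bm (p g) (q g) with hBg
    set S : Matrix (Fin 2) (Fin 2) ℝ := ∑ k ∈ Finset.Icc 1 g,
        (c (g + 1) - c k)⁻¹ • (Phi c p q g k * Bg) with hS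
    have hA1 : ∑ k ∈ Finset.Icc 1 g, Phi c p q (g + 1) k =
        (∑ k ∈ Finset.Icc 1 g, Phi c p q g k) - S := by
      rw [hS, ← Finset.sum_sub_distrib]
      refine Finset.sum_congr rfl fun k hk => ?_
      rw [Phi_succ c p q g k (Finset.mem_Icc.mp hk).2, bpa_eq, mul_sub, mul_one,
        mul_smul_comm, ← hBg]
    have hA2 : Phi c p q (g + 1) (g + 1) = Bg + S := by
      rw [Phi_top, hPg, sub_mul, one_mul, Finset.sum_mul, ← hBg, hS]
      have h : ∀ k ∈ Finset.Icc 1 g,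
          (c k - c (g + 1))⁻¹ • Phi c p q g k * Bg =
            -((c (g + 1) - c k)⁻¹ • (Phi c p q g k * Bg)) := by
        intro k _
        rw [smul_mul_assoc, ← neg_smul]
        congr 1
        rw [← inv_neg, neg_sub]
      rw [Finset.sum_congr rfl h, Finset.sum_neg_distrib]
      abel
    rw [Finset.sum_Icc_succ_top (by omega : 1 ≤ g + 1), hA1, hA2,
      Finset.sum_range_succ, ih hc', ← hBg]
    abel

lemma uvT (a b : ℝ) :
    (!![a; b] : Matrix (Fin 2) (Fin 1) ℝ) * (!![-b, a] : Matrix (Fin 1) (Fin 2) ℝ) =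
      -(Bm a b) := by
  ext i j
  fin_cases i <;> fin_cases j <;>
    simp [Bm, jmat, Matrix.mul_apply, Fin.sum_univ_two, Fin.sum_univ_one]

lemma trace_BmD (a b e : ℝ) :
    (Bm a b * !![(0:ℝ), 0; 0, e]).trace = -(a * b) * e := by
  simp [Bm, jmat, Matrix.trace, Matrix.mul_apply, Fin.sum_univ_two, Fin.sum_univ_one,
    Matrix.diag]
  ring_nf
  tauto

/-- The alternative representation of `q_g`:
`q_g − (Σ_{j=0}^{g} p_j q_j)/p_g = −Σ_{k=1}^{g} tr( [∏_{j=0}^{k−2} a(c_k,c_{j+1};p_j,q_j)] ·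
(p_{k−1},q_{k−1})ᵀ · (−q_{k−1},p_{k−1}) · [∏_{j=k}^{g−1} a(c_k,c_{j+1};p_j,q_j)] ·
[[0,0],[0,1/p_g]] )`. -/
theorem statement6 (g : ℕ) (hg : 1 ≤ g) (c p q : ℕ → ℝ)
    (hc : ∀ i j, 1 ≤ i → i ≤ g → 1 ≤ j → j ≤ g → c i = c j → i = j)
    (hpg : p g ≠ 0) :
    q g - (∑ j ∈ Finset.range (g + 1), p j * q j) / p g =
      -∑ k ∈ Finset.Icc 1 g,
        (prodBP (fun j => bpa (c k) (c (j + 1)) (p j) (q j)) 0 (k - 1) *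
          (!![p (k - 1); q (k - 1)] : Matrix (Fin 2) (Fin 1) ℝ) *
          (!![-(q (k - 1)), p (k - 1)] : Matrix (Fin 1) (Fin 2) ℝ) *
          prodBP (fun j => bpa (c k) (c (j + 1)) (p j) (q j)) k (g - k) *
          (!![0, 0; 0, 1 / p g] : Matrix (Fin 2) (Fin 2) ℝ)).trace := by
  have hc' : ∀ i ∈ Finset.Icc 1 g, ∀ j ∈ Finset.Icc 1 g, c i = c j → i = j := by
    intro i hi j hj
    simp only [Finset.mem_Icc] at hi hj
    exact hc i j hi.1 hi.2 hj.1 hj.2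
  have hterm : ∀ k ∈ Finset.Icc 1 g,
      (prodBP (fun j => bpa (c k) (c (j + 1)) (p j) (q j)) 0 (k - 1) *
        (!![p (k - 1); q (k - 1)] : Matrix (Fin 2) (Fin 1) ℝ) *
        (!![-(q (k - 1)), p (k - 1)] : Matrix (Fin 1) (Fin 2) ℝ) *
        prodBP (fun j => bpa (c k) (c (j + 1)) (p j) (q j)) k (g - k) *
        (!![0, 0; 0, 1 / p g] : Matrix (Fin 2) (Fin 2) ℝ)).trace =
        -(Phi c p q g k * !![(0:ℝ), 0; 0, 1 / p g]).trace := by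
    intro k _
    have h : prodBP (fun j => bpa (c k) (c (j + 1)) (p j) (q j)) 0 (k - 1) *
        (!![p (k - 1); q (k - 1)] : Matrix (Fin 2) (Fin 1) ℝ) *
        (!![-(q (k - 1)), p (k - 1)] : Matrix (Fin 1) (Fin 2) ℝ) *
        prodBP (fun j => bpa (c k) (c (j + 1)) (p j) (q j)) k (g - k) *
        (!![0, 0; 0, 1 / p g] : Matrix (Fin 2) (Fin 2) ℝ) =
        -(Phi c p q g k * !![(0:ℝ), 0; 0, 1 / p g]) := by
      rw [Matrix.mul_assoc (prodBP (fun j => bpa (c k) (c (j + 1)) (p j) (q j)) 0 (k - 1))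
        (!![p (k - 1); q (k - 1)] : Matrix (Fin 2) (Fin 1) ℝ)
        (!![-(q (k - 1)), p (k - 1)] : Matrix (Fin 1) (Fin 2) ℝ), uvT]
      unfold Phi
      noncomm_ring
    rw [h, Matrix.trace_neg]
  have hsum : ∑ k ∈ Finset.Icc 1 g,
      (prodBP (fun j => bpa (c k) (c (j + 1)) (p j) (q j)) 0 (k - 1) *
        (!![p (k - 1); q (k - 1)] : Matrix (Fin 2) (Fin 1) ℝ) *
        (!![-(q (k - 1)), p (k - 1)] : Matrix (Fin 1) (Fin 2) ℝ) *
        prodBP (fun j => bpa (c k) (c (j + 1)) (p j) (q j)) k (g - k) *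
        (!![0, 0; 0, 1 / p g] : Matrix (Fin 2) (Fin 2) ℝ)).trace =
      -∑ k ∈ Finset.Icc 1 g, (Phi c p q g k * !![(0:ℝ), 0; 0, 1 / p g]).trace := by
    rw [← Finset.sum_neg_distrib]
    exact Finset.sum_congr rfl hterm
  rw [hsum, neg_neg]
  have hPhi := sumPhi c p q g hc'
  calc q g - (∑ j ∈ Finset.range (g + 1), p j * q j) / p g
      = ∑ j ∈ Finset.range g, -(p j * q j) * (1 / p g) := by
        rw [Finset.sum_range_succ]
        have : ∑ j ∈ Finset.range g, -(p j * q j) * (1 / p g) =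
            (∑ j ∈ Finset.range g, -(p j * q j)) * (1 / p g) :=
          (Finset.sum_mul _ _ _).symm
        rw [this, Finset.sum_neg_distrib]
        field_simp
        ring
    _ = ∑ j ∈ Finset.range g, (Bm (p j) (q j) * !![(0:ℝ), 0; 0, 1 / p g]).trace :=
        Finset.sum_congr rfl fun j _ => (trace_BmD (p j) (q j) (1 / p g)).symm
    _ = ((∑ j ∈ Finset.range g, Bm (p j) (q j)) * !![(0:ℝ), 0; 0, 1 / p g]).trace := by
        rw [Finset.sum_mul, Matrix.trace_sum]
    _ = ((∑ k ∈ Finset.Icc 1 g, Phi c p q g k) * !![(0:ℝ), 0; 0, 1 / p g]).trace := by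
        rw [hPhi]
    _ = ∑ k ∈ Finset.Icc 1 g, (Phi c p q g k * !![(0:ℝ), 0; 0, 1 / p g]).trace := by
        rw [Finset.sum_mul, Matrix.trace_sum]
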